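/- Let δ_0 > 0 and δ_{i+1} = δ_i/(1+δ_i)^2, and define d_i = Π_{k=0}^{i} 1/(1+δ_k). Then there exists a constant C > 0 such that d_i ≤ C/√i for all i ≥ 1; in particular d_i = O(i^{-1/2}). -/

import Mathlib

/-!
The recursion inverts to `1 / δ (n+1) = 1 / δ n + 2 + δ n`, so `1 / δ n` grows at least like `2 n`,
i.e. `δ n ≤ 1 / (2 n)`. On the other hand, telescoping the recursion gives
`δ (i+1) = δ 0 * d i ^ 2`, hence `d i ^ 2 ≤ 1 / (2 δ 0 i)`.
-/

lemma inv_div_one_add_sq {x : ℝ} (hx : x ≠ 0) : (x / (1 + x) ^ 2)⁻¹ = x⁻¹ + 2 + x := by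
  field_simp
  ring

section Recursion

variable {δ : ℕ → ℝ} (hrec : ∀ n, δ (n + 1) = δ n / (1 + δ n) ^ 2)
include hrec

lemma pos_of_div_one_add_sq_rec (h0 : 0 < δ 0) (n : ℕ) : 0 < δ n := by
  induction n with
  | zero => exact h0
  | succ n ih => rw [hrec]; positivity

lemma two_mul_le_inv_of_div_one_add_sq_rec (h0 : 0 < δ 0) (n : ℕ) : 2 * (n : ℝ) ≤ (δ n)⁻¹ := by
  induction n with
  | zero => simpa using h0.le
  | succ n ih =>
    have hn := pos_of_div_one_add_sq_rec hrec h0 n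
    rw [hrec, inv_div_one_add_sq hn.ne']
    push_cast
    linarith

lemma div_one_add_sq_rec_eq_mul_prod_sq (n : ℕ) :
    δ (n + 1) = δ 0 * (∏ k ∈ Finset.range (n + 1), 1 / (1 + δ k)) ^ 2 := by
  induction n with
  | zero => rw [hrec 0, zero_add, Finset.prod_range_one, one_div, inv_pow, div_eq_mul_inv]
  | succ n ih =>
    rw [Finset.prod_range_succ, mul_pow, ← mul_assoc, ← ih, hrec (n + 1), one_div, inv_pow,
      div_eq_mul_inv]

end Recursion

theorem stmt6 (d : ℕ → ℝ) (h0 : 0 < d 0)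
    (hrec : ∀ i, d (i+1) = d i / (1 + d i)^2) :
    ∃ C : ℝ, 0 < C ∧ ∀ i : ℕ, 1 ≤ i →
      (∏ k ∈ Finset.range (i+1), 1 / (1 + d k)) ≤ C / Real.sqrt i := by
  refine ⟨(Real.sqrt (2 * d 0))⁻¹, by positivity, fun i hi => ?_⟩
  set P := ∏ k ∈ Finset.range (i + 1), 1 / (1 + d k)
  have hP : 0 ≤ P := Finset.prod_nonneg fun k _ =>
    (one_div_pos.mpr (by linarith [pos_of_div_one_add_sq_rec hrec h0 k])).le
  have hi : (0 : ℝ) < i := by exact_mod_cast hi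
  have hsq : P ^ 2 * (i * (2 * d 0)) ≤ 1 := by
    have hbound := two_mul_le_inv_of_div_one_add_sq_rec hrec h0 (i + 1)
    have hpos := pos_of_div_one_add_sq_rec hrec h0 (i + 1)
    rw [div_one_add_sq_rec_eq_mul_prod_sq hrec i] at hbound hpos
    rw [le_inv_comm₀ (by positivity) hpos, Nat.cast_succ] at hbound
    calc P ^ 2 * (i * (2 * d 0)) = d 0 * P ^ 2 * (2 * i) := by ring
      _ ≤ (2 * (i + 1 : ℝ))⁻¹ * (2 * i) := by gcongr
      _ ≤ 1 := by rw [inv_mul_le_iff₀ (by positivity)]; linarith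
  rw [inv_div_left, ← Real.sqrt_mul (by positivity), ← one_div, le_div_iff₀ (by positivity)]
  calc P * Real.sqrt (i * (2 * d 0)) = Real.sqrt (P ^ 2 * (i * (2 * d 0))) := by
        rw [Real.sqrt_mul (sq_nonneg P), Real.sqrt_sq hP]
    _ ≤ 1 := Real.sqrt_le_one.mpr hsq
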